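/- Let β ∈ ℝ with sin β ≠ 0 and set a_β = (1 − cos β)/|sin β|. Then the substitution s = (t − cos β)/|sin β| yields the identity ∫₁^∞ f_β(t)^{−5/2} · (|sin β|/(t − cos β)) dt = 2^{5/2} · |sin β|^{−3/2} · ∫_{a_β}^∞ s^{3/2}/(s² + 1)^{5/2} ds; in particular, with C = 2^{5/2} ∫₀^∞ s^{3/2}(s² + 1)^{−5/2} ds < ∞, one has ∫₁^∞ f_β(t)^{−5/2} (|sin β|/(t − cos β)) dt ≤ C·|sin β|^{−3/2}. -/

import Mathlib

/-!
As `sin² β + cos² β = 1`, the numerator of `f_β` is `(t - cos β)² + sin² β`. With `σ = |sin β|`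
and `s = (t - cos β)/σ` this gives `f_β(t) = σ (s² + 1)/(2s)` and `σ/(t - cos β) = 1/s`, so the
integrand is `2^{5/2} σ^{-5/2} s^{3/2} (s² + 1)^{-5/2}` and `dt = σ ds`. The new integrand is
continuous on `[0, 1]` and `O(s^{-7/2})` at infinity, hence integrable on `(0, ∞)`; it is
nonnegative and `a_β ≥ 0`, which gives the bound.
-/

/-- `fbeta β t = (t² − 2t·cos β + 1)/(2(t − cos β))`, the function `f_β` from the paper. -/
noncomputable def fbeta (β t : ℝ) : ℝ :=
  (t ^ 2 - 2 * t * Real.cos β + 1) / (2 * (t - Real.cos β))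

open MeasureTheory Set Real

theorem integral_Ioi_comp_sub_div {E : Type*} [NormedAddCommGroup E] [NormedSpace ℝ E]
    (g : ℝ → E) (a c : ℝ) {σ : ℝ} (hσ : 0 < σ) :
    ∫ t in Ioi a, g ((t - c) / σ) = σ • ∫ s in Ioi ((a - c) / σ), g s := by
  have hind : (Ioi a).indicator (fun t => g ((t - c) / σ)) =
      fun t => (Ioi ((a - c) / σ)).indicator g ((t - c) / σ) := by
    ext t
    simp only [indicator, mem_Ioi, div_lt_div_iff_of_pos_right hσ, sub_lt_sub_iff_right]
  rw [← integral_indicator measurableSet_Ioi, ← integral_indicator measurableSet_Ioi, hind,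
    integral_sub_right_eq_self (fun t => (Ioi ((a - c) / σ)).indicator g (t / σ)) c,
    Measure.integral_comp_div, abs_of_pos hσ]

theorem integrableOn_Ioi_rpow_mul_sq_add_one_rpow {a b : ℝ} (ha : 0 ≤ a) (hab : a - 2 * b < -1) :
    IntegrableOn (fun s : ℝ => s ^ a * (s ^ 2 + 1) ^ (-b)) (Ioi 0) := by
  have hcont : Continuous fun s : ℝ => s ^ a * (s ^ 2 + 1) ^ (-b) :=
    (continuous_rpow_const ha).mul
      ((by fun_prop : Continuous fun s : ℝ => s ^ 2 + 1).rpow_const fun s => Or.inl (by positivity))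
  rw [← Ioc_union_Ioi_eq_Ioi zero_le_one]
  refine IntegrableOn.union ((hcont.integrableOn_Icc).mono_set Ioc_subset_Icc_self) ?_
  refine (integrableOn_Ioi_rpow_of_lt hab one_pos).mono' hcont.aestronglyMeasurable.restrict ?_
  filter_upwards [ae_restrict_mem measurableSet_Ioi] with s (hs : 1 < s)
  have hs0 : 0 < s := one_pos.trans hs
  rw [norm_of_nonneg (by positivity)]
  calc s ^ a * (s ^ 2 + 1) ^ (-b) ≤ s ^ a * (s ^ 2) ^ (-b) :=
        mul_le_mul_of_nonneg_left
          (rpow_le_rpow_of_nonpos (by positivity) (by linarith) (by linarith)) (by positivity)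
    _ = s ^ (a - 2 * b) := by
        rw [← rpow_natCast, ← rpow_mul hs0.le, ← rpow_add hs0]
        ring_nf

theorem fbeta_eq (β t : ℝ) :
    fbeta β t = ((t - cos β) ^ 2 + |sin β| ^ 2) / (2 * (t - cos β)) := by
  rw [fbeta, sq_abs, ← cos_sq_add_sin_sq β]
  ring_nf

theorem sq_add_sq_div_rpow_neg_mul {σ u : ℝ} (hσ : 0 < σ) (hu : 0 < u) (p : ℝ) :
    ((u ^ 2 + σ ^ 2) / (2 * u)) ^ (-p) * (σ / u) =
      2 ^ p * σ ^ (-p) * ((u / σ) ^ (p - 1) * ((u / σ) ^ 2 + 1) ^ (-p)) := by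
  obtain ⟨s, hs, rfl⟩ : ∃ s, 0 < s ∧ u = σ * s := ⟨u / σ, div_pos hu hσ, by field_simp⟩
  have hsplit : ((σ * s) ^ 2 + σ ^ 2) / (2 * (σ * s)) = σ * (s ^ 2 + 1) * (2 * s)⁻¹ := by
    field_simp
  rw [mul_div_cancel_left₀ _ hσ.ne', hsplit, mul_rpow (by positivity) (by positivity),
    mul_rpow hσ.le (by positivity), inv_rpow (by positivity), ← rpow_neg (by positivity), neg_neg,
    mul_rpow zero_le_two hs.le, rpow_sub_one hs.ne', div_mul_cancel_left₀ hσ.ne']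
  field_simp

theorem integral_fbeta_rpow_eq {β : ℝ} (hβ : sin β ≠ 0) :
    ∫ t in Ioi (1 : ℝ), fbeta β t ^ (-(5 / 2) : ℝ) * (|sin β| / (t - cos β)) =
      2 ^ ((5 : ℝ) / 2) * |sin β| ^ (-(3 / 2) : ℝ) *
        ∫ s in Ioi ((1 - cos β) / |sin β|), s ^ ((3 : ℝ) / 2) * (s ^ 2 + 1) ^ (-(5 / 2) : ℝ) := by
  have hσ : 0 < |sin β| := abs_pos.2 hβ
  have hpointwise : EqOn
      (fun t => fbeta β t ^ (-(5 / 2) : ℝ) * (|sin β| / (t - cos β)))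
      (fun t => 2 ^ ((5 : ℝ) / 2) * |sin β| ^ (-(5 / 2) : ℝ) *
        (((t - cos β) / |sin β|) ^ ((3 : ℝ) / 2) *
          (((t - cos β) / |sin β|) ^ 2 + 1) ^ (-(5 / 2) : ℝ)))
      (Ioi 1) := by
    intro t (ht : 1 < t)
    have hu : 0 < t - cos β := by linarith [cos_le_one β]
    dsimp only
    rw [fbeta_eq, sq_add_sq_div_rpow_neg_mul hσ hu]
    norm_num
  rw [setIntegral_congr_fun measurableSet_Ioi hpointwise, integral_const_mul,
    integral_Ioi_comp_sub_div (fun s => s ^ ((3 : ℝ) / 2) * (s ^ 2 + 1) ^ (-(5 / 2) : ℝ)) _ _ hσ,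
    smul_eq_mul, ← mul_assoc, mul_assoc _ _ |sin β|, ← rpow_add_one hσ.ne']
  norm_num

/-- with `a_β = (1 − cos β)/|sin β|`, the substitution
`s = (t − cos β)/|sin β|` gives
`∫₁^∞ f_β(t)^{−5/2}(|sin β|/(t − cos β)) dt
  = 2^{5/2}|sin β|^{−3/2} ∫_{a_β}^∞ s^{3/2}(s²+1)^{−5/2} ds`;
with `C = 2^{5/2}∫₀^∞ s^{3/2}(s²+1)^{−5/2} ds < ∞` (i.e. the integrand is integrable on
`(0,∞)`), the left-hand side is `≤ C·|sin β|^{−3/2}`. -/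
theorem stmt4 (β : ℝ) (hβ : Real.sin β ≠ 0) :
    (∫ t in Set.Ioi (1 : ℝ),
        fbeta β t ^ (-(5 / 2) : ℝ) * (|Real.sin β| / (t - Real.cos β))) =
      2 ^ ((5 : ℝ) / 2) * |Real.sin β| ^ (-(3 / 2) : ℝ) *
        ∫ s in Set.Ioi ((1 - Real.cos β) / |Real.sin β|),
          s ^ ((3 : ℝ) / 2) * (s ^ 2 + 1) ^ (-(5 / 2) : ℝ) ∧
    MeasureTheory.IntegrableOn
      (fun s : ℝ => s ^ ((3 : ℝ) / 2) * (s ^ 2 + 1) ^ (-(5 / 2) : ℝ)) (Set.Ioi 0) ∧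
    (∫ t in Set.Ioi (1 : ℝ),
        fbeta β t ^ (-(5 / 2) : ℝ) * (|Real.sin β| / (t - Real.cos β))) ≤
      (2 ^ ((5 : ℝ) / 2) *
          ∫ s in Set.Ioi (0 : ℝ), s ^ ((3 : ℝ) / 2) * (s ^ 2 + 1) ^ (-(5 / 2) : ℝ)) *
        |Real.sin β| ^ (-(3 / 2) : ℝ) := by
  have hint : IntegrableOn (fun s : ℝ => s ^ ((3 : ℝ) / 2) * (s ^ 2 + 1) ^ (-(5 / 2) : ℝ))
      (Ioi 0) :=
    integrableOn_Ioi_rpow_mul_sq_add_one_rpow (by norm_num) (by norm_num)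
  have ha : 0 ≤ (1 - cos β) / |sin β| :=
    div_nonneg (sub_nonneg.2 (cos_le_one β)) (abs_nonneg _)
  have hmono :
      ∫ s in Ioi ((1 - cos β) / |sin β|), s ^ ((3 : ℝ) / 2) * (s ^ 2 + 1) ^ (-(5 / 2) : ℝ) ≤
        ∫ s in Ioi 0, s ^ ((3 : ℝ) / 2) * (s ^ 2 + 1) ^ (-(5 / 2) : ℝ) :=
    setIntegral_mono_set hint
      (ae_restrict_of_forall_mem measurableSet_Ioi fun s (hs : 0 < s) => by positivity)
      (Ioi_subset_Ioi ha).eventuallyLE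
  refine ⟨integral_fbeta_rpow_eq hβ, hint, ?_⟩
  rw [integral_fbeta_rpow_eq hβ, mul_right_comm]
  gcongr
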